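/- arXiv:1501.07618 — 3 statements merged into one kernel-verified Lean document; each statement's English description precedes it below -/
import Mathlib

section
/- For every real number b with 0 < b < 1, the quadratic expression 9π²b² − (256 + 6π²)b + 21π² − 256 is negative. -/
/-! A quadratic with nonnegative leading coefficient lies below its chord on `[0, 1]`, so it is
negative there as soon as it is negative at both endpoints. At `b = 0` and `b = 1` the values are
`21π² - 256` and `24π² - 512`, both negative because `π² < 10`. -/

open Real

lemma quadratic_le_chord {a c d b : ℝ} (ha : 0 ≤ a) (hb0 : 0 ≤ b) (hb1 : b ≤ 1) :
    a * b ^ 2 + c * b + d ≤ (1 - b) * d + b * (a + c + d) := by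
  nlinarith [mul_nonneg ha (mul_nonneg hb0 (sub_nonneg.mpr hb1))]

lemma quadratic_neg_of_endpoints_neg {a c d b : ℝ} (ha : 0 ≤ a) (hb0 : 0 ≤ b) (hb1 : b ≤ 1)
    (h0 : d < 0) (h1 : a + c + d < 0) : a * b ^ 2 + c * b + d < 0 := by
  have hchord : (1 - b) * d + b * (a + c + d) < 0 :=
    calc (1 - b) * d + b * (a + c + d)
        ≤ (1 - b) * max d (a + c + d) + b * max d (a + c + d) :=
          add_le_add (mul_le_mul_of_nonneg_left (le_max_left _ _) (sub_nonneg.mpr hb1))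
            (mul_le_mul_of_nonneg_left (le_max_right _ _) hb0)
      _ = max d (a + c + d) := by ring
      _ < 0 := max_lt h0 h1
  exact (quadratic_le_chord ha hb0 hb1).trans_lt hchord

lemma sq_pi_lt_ten : π ^ 2 < 10 := by
  nlinarith [pi_pos, pi_lt_d2]

theorem quadratic_neg (b : ℝ) (hb0 : 0 < b) (hb1 : b < 1) :
    9 * π ^ 2 * b ^ 2 - (256 + 6 * π ^ 2) * b + 21 * π ^ 2 - 256 < 0 := by
  have hq := quadratic_neg_of_endpoints_neg (a := 9 * π ^ 2) (c := -(256 + 6 * π ^ 2))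
    (d := 21 * π ^ 2 - 256) (by positivity) hb0.le hb1.le
    (by linarith [sq_pi_lt_ten]) (by linarith [sq_pi_lt_ten])
  linarith
end

section
/- For all real b with 0 < b < 1, (3π²((b−1)²+2)(b²+1) − 64(b−1)²(b+1))/(3b²((b−1)²+4)) < π²(1+b)²/(4b²). -/
open Real

theorem upper_bound_lt_lower_bound (b : ℝ) (hb0 : 0 < b) (hb1 : b < 1) :
    (3 * π ^ 2 * ((b - 1) ^ 2 + 2) * (b ^ 2 + 1) - 64 * (b - 1) ^ 2 * (b + 1)) /
        (3 * b ^ 2 * ((b - 1) ^ 2 + 4)) <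
      π ^ 2 * (1 + b) ^ 2 / (4 * b ^ 2) := by
  have hpi : π < 3.15 := Real.pi_lt_d2
  have hpi0 : 0 < π := Real.pi_pos
  have hpisq : π ^ 2 < 9.9225 := by nlinarith
  have key : 3 * π ^ 2 * (3 * b ^ 2 - 2 * b + 7) < 256 * (b + 1) := by
    nlinarith [mul_pos hb0 (sub_pos.2 hb1), sq_nonneg b]
  have hb : b - 1 ≠ 0 := by linarith
  have hs : 0 < (b - 1) ^ 2 := by positivity
  rw [div_lt_div_iff₀ (by positivity) (by positivity)]
  nlinarith [mul_pos hs (sub_pos.2 key), sq_nonneg b, mul_pos (mul_pos hb0 hb0) hs]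
end

section
/- Let T_b be the right triangle with vertices (0,0), (1,0), (0,b), 0 < b < 1, and f(x,y) = (cos(πy/b) − cos(πx)) − (1−b)cos(πy/b)cos(πx). Then the Rayleigh quotient of f on T_b equals (3π²((b−1)²+2)(b²+1) − 64(b−1)²(b+1))/(3b²((b−1)²+4)). -/
/-!
Both integrals are computed by Fubini over the vertical sections `0 ≤ y ≤ b (1 - x)` of the
triangle. On a section, `f²` and `|∇f|²` are quadratic in `cos (π y / b)` (after
`sin² = 1 - cos²`), and at the top of the section `π y / b = π - π x`, so every inner integral is
again a trigonometric polynomial in `π x`, with at most a factor `1 - x`. The outer integrals are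
then evaluated through explicit primitives.
-/

open Real MeasureTheory Set

def rightTriangle (b : ℝ) : Set (ℝ × ℝ) := {p | 0 ≤ p.1 ∧ 0 ≤ p.2 ∧ b * p.1 + p.2 ≤ b}

noncomputable def testFunction (b : ℝ) (p : ℝ × ℝ) : ℝ :=
  (cos (π * p.2 / b) - cos (π * p.1)) - (1 - b) * (cos (π * p.2 / b) * cos (π * p.1))

section

variable {b : ℝ}

theorem mem_rightTriangle (hb : 0 < b) {x y : ℝ} :
    (x, y) ∈ rightTriangle b ↔ x ∈ Icc 0 1 ∧ y ∈ Icc 0 (b * (1 - x)) := by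
  simp only [rightTriangle, mem_ofPred_eq, mem_Icc]
  constructor
  · rintro ⟨hx, hy, hxy⟩
    exact ⟨⟨hx, by nlinarith⟩, hy, by linarith⟩
  · rintro ⟨⟨hx, -⟩, hy, hxy⟩
    exact ⟨hx, hy, by linarith⟩

theorem isClosed_rightTriangle : IsClosed (rightTriangle b) :=
  (isClosed_le continuous_const continuous_fst).inter
    ((isClosed_le continuous_const continuous_snd).inter
      (isClosed_le (f := fun p : ℝ × ℝ => b * p.1 + p.2) (by fun_prop) continuous_const))

theorem isCompact_rightTriangle (hb : 0 < b) : IsCompact (rightTriangle b) := by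
  refine isCompact_Icc.of_isClosed_subset isClosed_rightTriangle (s := Icc (0, 0) (1, b)) ?_
  rintro ⟨x, y⟩ hp
  obtain ⟨⟨hx0, hx1⟩, hy0, hy1⟩ := (mem_rightTriangle hb).1 hp
  exact ⟨⟨hx0, hy0⟩, hx1, by nlinarith⟩

theorem setIntegral_rightTriangle (hb : 0 < b) {g : ℝ × ℝ → ℝ} (hg : Continuous g) :
    ∫ p in rightTriangle b, g p = ∫ x in (0 : ℝ)..1, ∫ y in (0 : ℝ)..(b * (1 - x)), g (x, y) := by
  have hT := isClosed_rightTriangle (b := b)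
  have hsection : ∀ x, (∫ y, (rightTriangle b).indicator g (x, y)) =
      (Icc 0 1).indicator (fun x => ∫ y in Icc 0 (b * (1 - x)), g (x, y)) x := by
    intro x
    by_cases hx : x ∈ Icc (0 : ℝ) 1
    · rw [indicator_of_mem hx, ← integral_indicator measurableSet_Icc]
      congr 1 with y
      simp only [indicator, mem_rightTriangle hb, hx, true_and]
    · simp [indicator, mem_rightTriangle hb, hx]
  rw [← integral_indicator hT.measurableSet, Measure.volume_eq_prod,
    integral_prod _ ((integrable_indicator_iff hT.measurableSet).2
      (hg.continuousOn.integrableOn_compact (isCompact_rightTriangle hb))),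
    funext hsection, integral_indicator measurableSet_Icc,
    intervalIntegral.integral_of_le zero_le_one, ← integral_Icc_eq_integral_Ioc]
  refine setIntegral_congr_fun measurableSet_Icc fun x hx => ?_
  rw [intervalIntegral.integral_of_le (mul_nonneg hb.le (sub_nonneg.2 hx.2)),
    integral_Icc_eq_integral_Ioc]

theorem deriv_testFunction_fst (x y : ℝ) :
    deriv (fun s => testFunction b (s, y)) x =
      π * sin (π * x) * (1 + (1 - b) * cos (π * y / b)) := by
  have hc := ((hasDerivAt_id' x).const_mul π).cos
  refine (((hc.const_sub (cos (π * y / b))).sub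
    ((hc.const_mul (cos (π * y / b))).const_mul (1 - b))).deriv).trans ?_
  ring

theorem deriv_testFunction_snd (x y : ℝ) :
    deriv (fun t => testFunction b (x, t)) y =
      -(π / b) * sin (π * y / b) * (1 - (1 - b) * cos (π * x)) := by
  have hc := (((hasDerivAt_id' y).const_mul π).div_const b).cos
  refine (((hc.sub_const (cos (π * x))).sub
    ((hc.mul_const (cos (π * x))).const_mul (1 - b))).deriv).trans ?_
  ring

theorem integral_quadratic_cos_pi_div (hb : b ≠ 0) (x P Q R : ℝ) :
    ∫ y in (0 : ℝ)..(b * (1 - x)), (P + Q * cos (π * y / b) + R * cos (π * y / b) ^ 2) =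
      b * (P * (1 - x) + Q * sin (π * x) / π +
        R * ((1 - x) / 2 - sin (π * x) * cos (π * x) / (2 * π))) := by
  have hπ := pi_ne_zero
  have hG : ∀ y, HasDerivAt
      (fun y => P * y + Q * (b / π) * sin (π * y / b) +
        R * (y / 2 + b / (2 * π) * (sin (π * y / b) * cos (π * y / b))))
      (P + Q * cos (π * y / b) + R * cos (π * y / b) ^ 2) y := by
    intro y
    have hθ := ((hasDerivAt_id' y).const_mul π).div_const b
    refine (((hasDerivAt_id' y).const_mul P).add (hθ.sin.const_mul (Q * (b / π)))).add
      ((((hasDerivAt_id' y).div_const 2).add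
        ((hθ.sin.mul hθ.cos).const_mul (b / (2 * π)))).const_mul R) |>.congr_deriv ?_
    field_simp
    linear_combination (-R) * sin_sq_add_cos_sq (π * y / b)
  rw [intervalIntegral.integral_eq_sub_of_hasDerivAt (fun y _ => hG y)
    (Continuous.intervalIntegrable (by fun_prop) _ _)]
  have hend : π * (b * (1 - x)) / b = π - π * x := by field_simp
  simp only [hend, sin_pi_sub, cos_pi_sub, mul_zero, zero_div, sin_zero, cos_zero]
  field_simp
  ring

theorem integral_one_sub_mul_quadratic_cos_add_sin_mul_cubic_cos (A₀ A₁ A₂ B₀ B₁ B₂ B₃ : ℝ) :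
    ∫ x in (0 : ℝ)..1, ((1 - x) * (A₀ + A₁ * cos (π * x) + A₂ * cos (π * x) ^ 2) +
      sin (π * x) * (B₀ + B₁ * cos (π * x) + B₂ * cos (π * x) ^ 2 + B₃ * cos (π * x) ^ 3)) =
      A₀ / 2 + 2 * A₁ / π ^ 2 + A₂ / 4 + 2 * B₀ / π + 2 * B₂ / (3 * π) := by
  have hπ := pi_ne_zero
  have hG : ∀ x, HasDerivAt
      (fun x => A₀ * (x - x ^ 2 / 2) + A₁ * ((1 - x) * sin (π * x) / π - cos (π * x) / π ^ 2) +
        A₂ * ((1 - x) * (x / 2 + sin (π * x) * cos (π * x) / (2 * π)) + x ^ 2 / 4 -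
          cos (π * x) ^ 2 / (4 * π ^ 2)) -
        (B₀ * cos (π * x) / π + B₁ * cos (π * x) ^ 2 / (2 * π) +
          B₂ * cos (π * x) ^ 3 / (3 * π) + B₃ * cos (π * x) ^ 4 / (4 * π)))
      ((1 - x) * (A₀ + A₁ * cos (π * x) + A₂ * cos (π * x) ^ 2) +
        sin (π * x) * (B₀ + B₁ * cos (π * x) + B₂ * cos (π * x) ^ 2 + B₃ * cos (π * x) ^ 3)) x := by
    intro x
    have hx := hasDerivAt_id' x
    have hc := (hx.const_mul π).cos
    have hs := (hx.const_mul π).sin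
    have hx₁ := hx.const_sub 1
    refine ((((hx.sub ((hx.pow 2).div_const 2)).const_mul A₀).add
      ((((hx₁.mul hs).div_const π).sub (hc.div_const (π ^ 2))).const_mul A₁)).add
      ((((hx₁.mul (((hx.div_const 2).add ((hs.mul hc).div_const (2 * π))))).add
        ((hx.pow 2).div_const 4)).sub ((hc.pow 2).div_const (4 * π ^ 2))).const_mul A₂)).sub
      (((((hc.const_mul B₀).div_const π).add (((hc.pow 2).const_mul B₁).div_const (2 * π))).add
        (((hc.pow 3).const_mul B₂).div_const (3 * π))).add
        (((hc.pow 4).const_mul B₃).div_const (4 * π))) |>.congr_deriv ?_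
    simp only [Pi.add_apply, Pi.mul_apply]
    field_simp
    linear_combination 12 * π * A₂ * (x - 1) * sin_sq_add_cos_sq (π * x)
  rw [intervalIntegral.integral_eq_sub_of_hasDerivAt (fun x _ => hG x)
    (Continuous.intervalIntegrable (by fun_prop) _ _)]
  simp only [mul_one, mul_zero, sin_pi, cos_pi, sin_zero, cos_zero]
  field_simp
  ring

theorem integral_rightTriangle_testFunction_sq (hb : 0 < b) :
    ∫ p in rightTriangle b, testFunction b p ^ 2 = b * ((b - 1) ^ 2 + 4) / 8 := by
  have hπ := pi_ne_zero
  rw [setIntegral_rightTriangle hb (by unfold testFunction; fun_prop)]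
  calc _ = ∫ x in (0 : ℝ)..1, b * ((1 - x) * (1 / 2 + (-(1 - b)) * cos (π * x) +
          (1 + (1 - b) ^ 2 / 2) * cos (π * x) ^ 2) +
        sin (π * x) * (0 + (-5 / (2 * π)) * cos (π * x) + 3 * (1 - b) / π * cos (π * x) ^ 2 +
          (-(1 - b) ^ 2 / (2 * π)) * cos (π * x) ^ 3)) := by
        refine intervalIntegral.integral_congr fun x _ => ?_
        calc _ = ∫ y in (0 : ℝ)..(b * (1 - x)),
              (cos (π * x) ^ 2 +
                (-2 * (1 - (1 - b) * cos (π * x)) * cos (π * x)) * cos (π * y / b) +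
                (1 - (1 - b) * cos (π * x)) ^ 2 * cos (π * y / b) ^ 2) := by
              refine intervalIntegral.integral_congr fun y _ => ?_
              simp only [testFunction]
              ring
          _ = _ := by
              rw [integral_quadratic_cos_pi_div hb.ne']
              field_simp
              ring
    _ = _ := by
        rw [intervalIntegral.integral_const_mul,
          integral_one_sub_mul_quadratic_cos_add_sin_mul_cubic_cos]
        field_simp
        ring

theorem integral_rightTriangle_gradient_testFunction_sq (hb : 0 < b) :
    ∫ p in rightTriangle b, ((deriv (fun s => testFunction b (s, p.2)) p.1) ^ 2 +
        (deriv (fun t => testFunction b (p.1, t)) p.2) ^ 2) =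
      (3 * π ^ 2 * ((b - 1) ^ 2 + 2) * (b ^ 2 + 1) - 64 * (b - 1) ^ 2 * (b + 1)) / (24 * b) := by
  have hπ := pi_ne_zero
  simp only [deriv_testFunction_fst, deriv_testFunction_snd]
  rw [setIntegral_rightTriangle hb (by fun_prop)]
  calc _ = ∫ x in (0 : ℝ)..1, b * ((1 - x) *
          (π ^ 2 * (1 + (1 - b) ^ 2 / 2) + π ^ 2 / (2 * b ^ 2) +
            (-(π ^ 2 * (1 - b) / b ^ 2)) * cos (π * x) +
            (-(π ^ 2 * (1 + (1 - b) ^ 2 / 2)) + π ^ 2 * (1 - b) ^ 2 / (2 * b ^ 2)) *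
              cos (π * x) ^ 2) +
        sin (π * x) * (2 * π * (1 - b) + (-(π * (1 - b) ^ 2 / 2) + π / (2 * b ^ 2)) * cos (π * x) +
          (-(2 * π * (1 - b)) - π * (1 - b) / b ^ 2) * cos (π * x) ^ 2 +
          (π * (1 - b) ^ 2 / 2 + π * (1 - b) ^ 2 / (2 * b ^ 2)) * cos (π * x) ^ 3)) := by
        refine intervalIntegral.integral_congr fun x _ => ?_
        calc _ = ∫ y in (0 : ℝ)..(b * (1 - x)),
              ((π ^ 2 * sin (π * x) ^ 2 + (π / b) ^ 2 * (1 - (1 - b) * cos (π * x)) ^ 2) +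
                (2 * π ^ 2 * (1 - b) * sin (π * x) ^ 2) * cos (π * y / b) +
                (π ^ 2 * (1 - b) ^ 2 * sin (π * x) ^ 2 -
                  (π / b) ^ 2 * (1 - (1 - b) * cos (π * x)) ^ 2) *
                  cos (π * y / b) ^ 2) := by
              refine intervalIntegral.integral_congr fun y _ => ?_
              linear_combination (π / b) ^ 2 * (1 - (1 - b) * cos (π * x)) ^ 2 *
                sin_sq_add_cos_sq (π * y / b)
          _ = _ := by
              rw [integral_quadratic_cos_pi_div hb.ne']
              simp only [sin_sq]
              field_simp
              ring
    _ = _ := by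
        rw [intervalIntegral.integral_const_mul,
          integral_one_sub_mul_quadratic_cos_add_sin_mul_cubic_cos]
        field_simp
        ring

end

theorem test_function_rayleigh_quotient_general (b : ℝ) (hb0 : 0 < b) :
    let T : Set (ℝ × ℝ) := {p | 0 ≤ p.1 ∧ 0 ≤ p.2 ∧ b * p.1 + p.2 ≤ b}
    let f : ℝ × ℝ → ℝ := fun p =>
      (Real.cos (π * p.2 / b) - Real.cos (π * p.1)) -
        (1 - b) * (Real.cos (π * p.2 / b) * Real.cos (π * p.1))
    (∫ p in T, ((deriv (fun s => f (s, p.2)) p.1) ^ 2 +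
        (deriv (fun t => f (p.1, t)) p.2) ^ 2)) / (∫ p in T, (f p) ^ 2) =
      (3 * π ^ 2 * ((b - 1) ^ 2 + 2) * (b ^ 2 + 1) - 64 * (b - 1) ^ 2 * (b + 1)) /
        (3 * b ^ 2 * ((b - 1) ^ 2 + 4)) := by
  show (∫ p in rightTriangle b, ((deriv (fun s => testFunction b (s, p.2)) p.1) ^ 2 +
      (deriv (fun t => testFunction b (p.1, t)) p.2) ^ 2)) /
      (∫ p in rightTriangle b, testFunction b p ^ 2) = _
  rw [integral_rightTriangle_gradient_testFunction_sq hb0,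
    integral_rightTriangle_testFunction_sq hb0]
  have : (b - 1) ^ 2 + 4 ≠ 0 := by positivity
  field_simp
  ring

theorem test_function_rayleigh_quotient (b : ℝ) (hb0 : 0 < b) (hb1 : b < 1) :
    let T : Set (ℝ × ℝ) := {p | 0 ≤ p.1 ∧ 0 ≤ p.2 ∧ b * p.1 + p.2 ≤ b}
    let f : ℝ × ℝ → ℝ := fun p =>
      (Real.cos (π * p.2 / b) - Real.cos (π * p.1)) -
        (1 - b) * (Real.cos (π * p.2 / b) * Real.cos (π * p.1))
    (∫ p in T, ((deriv (fun s => f (s, p.2)) p.1) ^ 2 +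
        (deriv (fun t => f (p.1, t)) p.2) ^ 2)) / (∫ p in T, (f p) ^ 2) =
      (3 * π ^ 2 * ((b - 1) ^ 2 + 2) * (b ^ 2 + 1) - 64 * (b - 1) ^ 2 * (b + 1)) /
        (3 * b ^ 2 * ((b - 1) ^ 2 + 4)) :=
  test_function_rayleigh_quotient_general b hb0
end
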